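/- Under the hypotheses of the residual bound for the restarted solver with compression (‖E_Z⁽ʲ⁾‖ ≤ δ, ‖E_R⁽ʲ⁾‖ ≤ δ, ‖R⁽ᵏ̄⁾‖ ≤ ε), and assuming additionally that A and B are normal with eigenvalues of nonnegative real part and Re(λ_{A,1}) + Re(λ_{B,1}) > 0, the exact solution X of A X + X B + C D* = 0 and the computed X⁽ᵏ̄⁾ satisfy ‖X⁽ᵏ̄⁾ − X‖ ≤ (ε + (k̄+1)δ)/(Re(λ_{A,1}) + Re(λ_{B,1})) + (k̄+1)δ. -/

import Mathlib

/-!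
Put `S = ∑ Z⁽ʲ⁾`, so the error is `(S - X) - ∑ E_Z⁽ʲ⁾`. The residual recursion telescopes:
`S - X` solves the Sylvester equation with right-hand side `R⁽ᵏ⁾ + ∑_{j<k} E_R⁽ʲ⁾`, of norm at most
`ε + kδ`.
For normal `A`, `B` the Sylvester operator `Y ↦ A Y + Y B` is bounded below by `a + b`: if `v` is a
unit vector with `‖Y v‖ = ‖Y‖`, then `Y* (Y v) = ‖Y‖² v`, so
`Re ⟪(A Y + Y B) v, Y v⟫ = Re ⟪A (Y v), Y v⟫ + ‖Y‖² Re ⟪B v, v⟫ ≥ (a + b) ‖Y‖²`.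
Here `Re ⟪T x, x⟫ ≥ a ‖x‖²` because `a ≤ ℜ T` in the C⋆-order: the spectrum of `ℜ T` consists of the
real parts of the spectrum of the normal operator `T`.
-/

open Matrix

noncomputable def specNorm {m n : Type*} [Fintype m] [Fintype n] [DecidableEq n]
    (M : Matrix m n ℂ) : ℝ :=
  ‖LinearMap.toContinuousLinearMap (Matrix.toEuclideanLin M)‖

open scoped InnerProductSpace ComplexStarModule Matrix.Norms.L2Operator
open Finset

theorem norm_sum_range_le_mul {E : Type*} [SeminormedAddCommGroup E] {f : ℕ → E} {m : ℕ} {δ : ℝ}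
    (h : ∀ j < m, ‖f j‖ ≤ δ) : ‖∑ j ∈ range m, f j‖ ≤ m * δ :=
  (norm_sum_le_of_le _ fun j hj ↦ h j (mem_range.1 hj)).trans_eq (by simp)

section Sylvester

variable {α : Type*} [Ring α] {A B F : α} {Z R ER : ℕ → α} {k : ℕ}

theorem sylvester_sum_range_residual (h0 : A * Z 0 + Z 0 * B + F = R 0)
    (hrec : ∀ j, 1 ≤ j → j ≤ k → A * Z j + Z j * B + R (j - 1) - ER (j - 1) = R j) :
    ∀ m ≤ k, A * (∑ j ∈ range (m + 1), Z j) + (∑ j ∈ range (m + 1), Z j) * B + F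
      = R m + ∑ j ∈ range m, ER j
  | 0, _ => by simpa using h0
  | m + 1, hm => by
    have ih := sylvester_sum_range_residual h0 hrec m (by omega)
    have hstep := hrec (m + 1) (by omega) hm
    rw [Nat.add_sub_cancel] at hstep
    rw [sum_range_succ Z (m + 1), sum_range_succ ER m, ← hstep, eq_sub_of_add_eq ih.symm]
    noncomm_ring

theorem sylvester_sum_range_sub_eq {X : α} (hX : A * X + X * B + F = 0)
    (h0 : A * Z 0 + Z 0 * B + F = R 0)
    (hrec : ∀ j, 1 ≤ j → j ≤ k → A * Z j + Z j * B + R (j - 1) - ER (j - 1) = R j) :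
    A * (∑ j ∈ range (k + 1), Z j - X) + (∑ j ∈ range (k + 1), Z j - X) * B
      = R k + ∑ j ∈ range k, ER j := by
  rw [← sylvester_sum_range_residual h0 hrec k le_rfl, ← sub_zero (_ + _ + F), ← hX]
  noncomm_ring

end Sylvester

theorem ContinuousLinearMap.exists_norm_eq_one_norm_apply_eq_opNorm {𝕜 E F : Type*} [RCLike 𝕜]
    [NormedAddCommGroup E] [NormedSpace 𝕜 E] [FiniteDimensional 𝕜 E] [Nontrivial E]
    [NormedAddCommGroup F] [NormedSpace 𝕜 F] (T : E →L[𝕜] F) :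
    ∃ v, ‖v‖ = 1 ∧ ‖T v‖ = ‖T‖ := by
  have : ProperSpace E := FiniteDimensional.proper_rclike 𝕜 E
  obtain ⟨v, hv, hmax⟩ := (isCompact_sphere (0 : E) 1).exists_isMaxOn
    (Set.nonempty_coe_sort.1 (NormedSpace.sphere_nonempty_rclike 𝕜 zero_le_one))
    (by fun_prop : Continuous fun v ↦ ‖T v‖).continuousOn
  rw [mem_sphere_zero_iff_norm] at hv
  refine ⟨v, hv, le_antisymm (by simpa [hv] using T.le_opNorm v) ?_⟩
  exact T.opNorm_le_of_unit_norm (norm_nonneg _) fun x hx ↦ hmax (mem_sphere_zero_iff_norm.2 hx)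

theorem ContinuousLinearMap.adjoint_apply_apply_eq_of_norm_apply_eq_opNorm {𝕜 E F : Type*}
    [RCLike 𝕜] [NormedAddCommGroup E] [InnerProductSpace 𝕜 E] [CompleteSpace E]
    [NormedAddCommGroup F] [InnerProductSpace 𝕜 F] [CompleteSpace F]
    (T : E →L[𝕜] F) {v : E} (hv : ‖v‖ = 1) (hTv : ‖T v‖ = ‖T‖) :
    adjoint T (T v) = ((‖T‖ ^ 2 : ℝ) : 𝕜) • v := by
  have hnorm : ‖adjoint T (T v)‖ ≤ ‖T‖ ^ 2 := by
    calc ‖adjoint T (T v)‖ ≤ ‖adjoint T‖ * ‖T v‖ := (adjoint T).le_opNorm _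
      _ = ‖T‖ ^ 2 := by rw [LinearIsometryEquiv.norm_map, hTv, sq]
  have hinner : RCLike.re ⟪adjoint T (T v), v⟫_𝕜 = ‖T‖ ^ 2 := by
    rw [adjoint_inner_left, inner_self_eq_norm_sq, hTv]
  have hsq : ‖adjoint T (T v) - ((‖T‖ ^ 2 : ℝ) : 𝕜) • v‖ ^ 2 ≤ 0 := by
    rw [@norm_sub_sq 𝕜, inner_smul_right, RCLike.re_ofReal_mul, hinner, norm_smul, hv,
      RCLike.norm_ofReal, abs_of_nonneg (by positivity)]
    nlinarith [norm_nonneg (adjoint T (T v))]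
  rw [← sub_eq_zero, ← norm_eq_zero]
  exact pow_eq_zero_iff (n := 2) two_ne_zero |>.1 (le_antisymm hsq (sq_nonneg _))

section Operator

variable {E F : Type*} [NormedAddCommGroup E] [InnerProductSpace ℂ E] [CompleteSpace E]
  [NormedAddCommGroup F] [InnerProductSpace ℂ F] [FiniteDimensional ℂ F]

theorem ContinuousLinearMap.re_inner_realPart_apply_self (T : E →L[ℂ] E) (x : E) :
    (⟪(ℜ T : E →L[ℂ] E) x, x⟫_ℂ).re = (⟪T x, x⟫_ℂ).re := by
  have hstar : (⟪star T x, x⟫_ℂ).re = (⟪T x, x⟫_ℂ).re := by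
    rw [star_eq_adjoint, adjoint_inner_left]
    exact inner_re_symm (𝕜 := ℂ) _ _
  simp only [realPart_apply_coe, ← Complex.coe_smul, _root_.smul_apply, _root_.add_apply,
    inner_smul_left, inner_add_left, Complex.conj_ofReal, Complex.re_ofReal_mul, Complex.add_re,
    hstar]
  ring

theorem mul_norm_sq_le_re_inner_apply_self {T : E →L[ℂ] E} [IsStarNormal T] {a : ℝ}
    (ha : ∀ z ∈ spectrum ℂ T, a ≤ z.re) (x : E) :
    a * ‖x‖ ^ 2 ≤ (⟪T x, x⟫_ℂ).re := by
  have hle : algebraMap ℝ (E →L[ℂ] E) a ≤ (ℜ T : E →L[ℂ] E) := by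
    rw [algebraMap_le_iff_le_spectrum, spectrum_realPart' T]
    rintro _ ⟨z, hz, rfl⟩
    exact ha z hz
  have hpos :=
    ((ContinuousLinearMap.nonneg_iff_isPositive _).1 (sub_nonneg.2 hle)).re_inner_nonneg_left x
  rw [_root_.sub_apply, inner_sub_left, RCLike.re_to_complex, Complex.sub_re,
    T.re_inner_realPart_apply_self, sub_nonneg] at hpos
  simpa [← Complex.coe_smul, inner_smul_left, inner_self_eq_norm_sq_to_K, ← Complex.ofReal_pow]
    using hpos

theorem mul_opNorm_le_opNorm_comp_add_comp {A : E →L[ℂ] E} {B : F →L[ℂ] F}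
    [IsStarNormal A] [IsStarNormal B] {a b : ℝ}
    (ha : ∀ z ∈ spectrum ℂ A, a ≤ z.re) (hb : ∀ z ∈ spectrum ℂ B, b ≤ z.re) (Y : F →L[ℂ] E) :
    (a + b) * ‖Y‖ ≤ ‖A ∘L Y + Y ∘L B‖ := by
  rcases subsingleton_or_nontrivial F with hF | hF
  · simp [Subsingleton.elim Y 0]
  obtain ⟨v, hv, hYv⟩ := Y.exists_norm_eq_one_norm_apply_eq_opNorm
  set G := A ∘L Y + Y ∘L B
  have hlower : (a + b) * ‖Y‖ ^ 2 ≤ (⟪G v, Y v⟫_ℂ).re := by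
    have hB : (⟪Y (B v), Y v⟫_ℂ).re = ‖Y‖ ^ 2 * (⟪B v, v⟫_ℂ).re := by
      rw [← ContinuousLinearMap.adjoint_inner_right,
        Y.adjoint_apply_apply_eq_of_norm_apply_eq_opNorm hv hYv, inner_smul_right]
      exact RCLike.re_ofReal_mul (K := ℂ) _ _
    have hAw := mul_norm_sq_le_re_inner_apply_self ha (Y v)
    have hBv := mul_norm_sq_le_re_inner_apply_self hb v
    simp only [G, _root_.add_apply, ContinuousLinearMap.comp_apply, inner_add_left,
      Complex.add_re, hB]
    rw [hYv] at hAw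
    rw [hv] at hBv
    nlinarith [sq_nonneg ‖Y‖]
  have hupper : (⟪G v, Y v⟫_ℂ).re ≤ ‖G‖ * ‖Y‖ :=
    calc (⟪G v, Y v⟫_ℂ).re ≤ ‖G v‖ * ‖Y v‖ :=
          (Complex.re_le_norm _).trans (norm_inner_le_norm _ _)
      _ ≤ ‖G‖ * ‖Y‖ := by
        rw [hYv]
        gcongr
        simpa [hv] using G.le_opNorm v
  rcases (norm_nonneg Y).eq_or_lt with hY | hY
  · rw [← hY, mul_zero]
    exact norm_nonneg _
  · exact le_of_mul_le_mul_right (by nlinarith) hY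

end Operator

theorem Matrix.mul_l2_opNorm_le_l2_opNorm_mul_add_mul {n : Type*} [Fintype n] [DecidableEq n]
    {A B : Matrix n n ℂ} [IsStarNormal A] [IsStarNormal B] {a b : ℝ}
    (ha : ∀ z ∈ spectrum ℂ A, a ≤ z.re) (hb : ∀ z ∈ spectrum ℂ B, b ≤ z.re) (Y : Matrix n n ℂ) :
    (a + b) * ‖Y‖ ≤ ‖A * Y + Y * B‖ := by
  have hspec (M : Matrix n n ℂ) : spectrum ℂ (toEuclideanCLM (𝕜 := ℂ) M) = spectrum ℂ M :=
    AlgEquiv.spectrum_eq (toEuclideanCLM (𝕜 := ℂ)) M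
  simpa only [cstar_norm_def, map_add, map_mul, ContinuousLinearMap.mul_def] using
    mul_opNorm_le_opNorm_comp_add_comp (hspec A ▸ ha) (hspec B ▸ hb) (toEuclideanCLM (𝕜 := ℂ) Y)

theorem specNorm_eq_l2_opNorm {m n : Type*} [Fintype m] [Fintype n] [DecidableEq n]
    (M : Matrix m n ℂ) : specNorm M = ‖M‖ :=
  rfl

theorem restarted_compressed_error_bound_general {n s : ℕ}
    (A B X : Matrix (Fin n) (Fin n) ℂ) (C D : Matrix (Fin n) (Fin s) ℂ)
    (hA : A * Aᴴ = Aᴴ * A) (hB : B * Bᴴ = Bᴴ * B)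
    (a b : ℝ)
    (ha : IsLeast (Complex.re '' spectrum ℂ A) a)
    (hb : IsLeast (Complex.re '' spectrum ℂ B) b)
    (hab : 0 < a + b)
    (hX : A * X + X * B + C * Dᴴ = 0)
    (k : ℕ) (δ ε : ℝ)
    (Z EZ R ER : ℕ → Matrix (Fin n) (Fin n) ℂ)
    (h0 : A * Z 0 + Z 0 * B + C * Dᴴ = R 0)
    (hrec : ∀ j, 1 ≤ j → j ≤ k → A * Z j + Z j * B + R (j - 1) - ER (j - 1) = R j)
    (hEZ : ∀ j ≤ k, specNorm (EZ j) ≤ δ)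
    (hER : ∀ j ≤ k, specNorm (ER j) ≤ δ)
    (hres : specNorm (R k) ≤ ε) :
    specNorm ((∑ j ∈ Finset.range (k + 1), (Z j - EZ j)) - X)
      ≤ (ε + (k + 1) * δ) / (a + b) + (k + 1) * δ := by
  simp only [specNorm_eq_l2_opNorm] at hEZ hER hres ⊢
  have : IsStarNormal A := ⟨hA.symm⟩
  have : IsStarNormal B := ⟨hB.symm⟩
  have hδ : 0 ≤ δ := (norm_nonneg _).trans (hEZ 0 k.zero_le)
  have hSX : ‖∑ j ∈ range (k + 1), Z j - X‖ ≤ (ε + k * δ) / (a + b) := by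
    rw [le_div_iff₀' hab]
    calc (a + b) * ‖∑ j ∈ range (k + 1), Z j - X‖
        ≤ ‖A * (∑ j ∈ range (k + 1), Z j - X) + (∑ j ∈ range (k + 1), Z j - X) * B‖ :=
          mul_l2_opNorm_le_l2_opNorm_mul_add_mul (Set.forall_mem_image.1 ha.2)
            (Set.forall_mem_image.1 hb.2) _
      _ ≤ ε + k * δ := by
          rw [sylvester_sum_range_sub_eq hX h0 hrec]
          exact norm_add_le_of_le hres (norm_sum_range_le_mul fun j hj ↦ hER j hj.le)
  have hEZ_sum : ‖∑ j ∈ range (k + 1), EZ j‖ ≤ (k + 1) * δ := by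
    exact_mod_cast norm_sum_range_le_mul fun j hj ↦ hEZ j (Nat.lt_succ_iff.1 hj)
  calc ‖∑ j ∈ range (k + 1), (Z j - EZ j) - X‖
      = ‖(∑ j ∈ range (k + 1), Z j - X) - ∑ j ∈ range (k + 1), EZ j‖ := by
        rw [sum_sub_distrib, sub_right_comm]
    _ ≤ (ε + k * δ) / (a + b) + (k + 1) * δ :=
        (norm_sub_le _ _).trans (add_le_add hSX hEZ_sum)
    _ ≤ (ε + (k + 1) * δ) / (a + b) + (k + 1) * δ := by gcongr; linarith

/-- Error bound for the restarted Sylvester solver with compression, for normal coefficients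
`A`, `B` whose spectra lie in the closed right half-plane:
`‖X⁽ᵏ⁾ − X‖ ≤ (ε + (k+1)δ)/(Re λ_{A,1} + Re λ_{B,1}) + (k+1)δ`. -/
theorem restarted_compressed_error_bound {n s : ℕ}
    (A B X : Matrix (Fin n) (Fin n) ℂ) (C D : Matrix (Fin n) (Fin s) ℂ)
    (hA : A * Aᴴ = Aᴴ * A) (hB : B * Bᴴ = Bᴴ * B)
    (a b : ℝ)
    (ha : IsLeast (Complex.re '' spectrum ℂ A) a)
    (hb : IsLeast (Complex.re '' spectrum ℂ B) b)
    (ha0 : 0 ≤ a) (hb0 : 0 ≤ b) (hab : 0 < a + b)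
    (hX : A * X + X * B + C * Dᴴ = 0)
    (k : ℕ) (δ ε : ℝ)
    (Z EZ R ER : ℕ → Matrix (Fin n) (Fin n) ℂ)
    (h0 : A * Z 0 + Z 0 * B + C * Dᴴ = R 0)
    (hrec : ∀ j, 1 ≤ j → j ≤ k → A * Z j + Z j * B + R (j - 1) - ER (j - 1) = R j)
    (hEZ : ∀ j ≤ k, specNorm (EZ j) ≤ δ)
    (hER : ∀ j ≤ k, specNorm (ER j) ≤ δ)
    (hres : specNorm (R k) ≤ ε) :
    specNorm ((∑ j ∈ Finset.range (k + 1), (Z j - EZ j)) - X)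
      ≤ (ε + (k + 1) * δ) / (a + b) + (k + 1) * δ :=
  restarted_compressed_error_bound_general A B X C D hA hB a b ha hb hab hX k δ ε Z EZ R ER h0 hrec
    hEZ hER hres
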